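/- arXiv:2504.19424 — 3 statements merged into one kernel-verified Lean document; each statement's English description precedes it below -/
import Mathlib

section
/- Let f : ℝⁿ₊ → ℝ be concave and positively homogeneous of degree 1, and let x be in the interior of ℝⁿ₊. If the sum over i of the negatives of the one-sided directional derivatives in the coordinate directions, ∑ᵢ (−f'(x; −eᵢ))·xᵢ, equals f(x), then for each i the directional derivatives satisfy −f'(x; −xᵢeᵢ) = f'(x; xᵢeᵢ), i.e. f is Gateaux differentiable in each coordinate direction at x. -/
/-!
The one-sided directional derivative `d ↦ f'(x; d)` of a concave function is superadditive.
Applied to `d = xᵢeᵢ` and `-d` this gives `f'(x; xᵢeᵢ) ≤ -f'(x; -xᵢeᵢ)`. Conversely, write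
`xᵢeᵢ = x + ∑_{j ≠ i} (-xⱼeⱼ)`: homogeneity gives `f'(x; x) = f x`, and positive homogeneity of
`f'(x; ·)` turns the Euler identity into `∑ⱼ f'(x; -xⱼeⱼ) = -f x`, so superadditivity yields
`f'(x; xᵢeᵢ) ≥ f x + (-f x - f'(x; -xᵢeᵢ)) = -f'(x; -xᵢeᵢ)`.
-/

open Filter Topology

/-- One-sided directional derivative: `L` is the limit of `(f (x + t • d) - f x) / t` as `t ↓ 0`. -/
def HasDirDeriv {n : ℕ} (f : (Fin n → ℝ) → ℝ) (x d : Fin n → ℝ) (L : ℝ) : Prop :=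
  Tendsto (fun t : ℝ => (f (x + t • d) - f x) / t) (nhdsWithin 0 (Set.Ioi 0)) (nhds L)

lemma pos_of_mem_interior_nonneg {ι : Type*} [Finite ι] {x : ι → ℝ}
    (hx : x ∈ interior {y : ι → ℝ | ∀ i, 0 ≤ y i}) (i : ι) : 0 < x i := by
  have hpi : {y : ι → ℝ | ∀ i, 0 ≤ y i} = Set.univ.pi fun _ => Set.Ici 0 := by
    ext y; exact Set.mem_univ_pi.symm
  rw [hpi, interior_pi_set Set.finite_univ] at hx
  simpa using hx i trivial

lemma eventually_add_smul_mem_of_mem_interior {E : Type*} [AddCommGroup E] [TopologicalSpace E]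
    [IsTopologicalAddGroup E] [Module ℝ E] [ContinuousSMul ℝ E] {s : Set E} {x : E}
    (hx : x ∈ interior s) (d : E) : ∀ᶠ t in 𝓝 (0 : ℝ), x + t • d ∈ s := by
  have hlim : Tendsto (fun t : ℝ => x + t • d) (𝓝 0) (𝓝 x) := by
    simpa using (by fun_prop : Continuous fun t : ℝ => x + t • d).tendsto 0
  exact hlim.eventually (mem_interior_iff_mem_nhds.mp hx)

lemma ConcaveOn.sum_mul_div_le {E : Type*} [AddCommGroup E] [Module ℝ E] {s : Set E}
    {f : E → ℝ} (hf : ConcaveOn ℝ s f) {ι : Type*} {S : Finset ι} {w : ι → ℝ}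
    (hw₀ : ∀ j ∈ S, 0 ≤ w j) (hw₁ : ∑ j ∈ S, w j = 1) {x : E} {d : ι → E} {t : ℝ} (ht : 0 ≤ t)
    (hmem : ∀ j ∈ S, x + t • d j ∈ s) :
    ∑ j ∈ S, w j * ((f (x + t • d j) - f x) / t) ≤ (f (x + t • ∑ j ∈ S, w j • d j) - f x) / t := by
  have hjensen := hf.le_map_sum hw₀ hw₁ hmem
  have hcomb : ∑ j ∈ S, w j • (x + t • d j) = x + t • ∑ j ∈ S, w j • d j := by
    simp only [smul_add, Finset.sum_add_distrib, ← Finset.sum_smul, hw₁, one_smul,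
      Finset.smul_sum, smul_comm t]
  rw [hcomb] at hjensen
  calc ∑ j ∈ S, w j * ((f (x + t • d j) - f x) / t)
      = (∑ j ∈ S, w j • f (x + t • d j) - f x) / t := by
        simp only [smul_eq_mul, mul_div_assoc', ← Finset.sum_div, mul_sub,
          Finset.sum_sub_distrib, ← Finset.sum_mul, hw₁, one_mul]
    _ ≤ (f (x + t • ∑ j ∈ S, w j • d j) - f x) / t := by gcongr

lemma sum_update_neg_smul_single {ι : Type*} [Fintype ι] [DecidableEq ι] (x : ι → ℝ) (i : ι) :
    ∑ j, Function.update (fun j => -(x j • (Pi.single j 1 : ι → ℝ))) i x j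
      = x i • Pi.single i 1 := by
  have hsplit : ∑ j ∈ Finset.univ.erase i, x j • (Pi.single j 1 : ι → ℝ)
      = x - x i • Pi.single i 1 := by
    refine eq_sub_of_add_eq' ((Finset.add_sum_erase _ (fun j => x j • (Pi.single j 1 : ι → ℝ))
      (Finset.mem_univ i)).trans ?_)
    simpa [← Pi.single_smul] using Finset.univ_sum_single x
  rw [Finset.sum_update_of_mem (Finset.mem_univ i), Finset.sdiff_singleton_eq_erase,
    Finset.sum_neg_distrib, hsplit]
  abel

namespace HasDirDeriv

variable {n : ℕ} {f : (Fin n → ℝ) → ℝ} {x d : Fin n → ℝ} {L : ℝ}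

lemma unique {M : ℝ} (hL : HasDirDeriv f x d L) (hM : HasDirDeriv f x d M) : L = M :=
  tendsto_nhds_unique hL hM

lemma zero : HasDirDeriv f x 0 0 := by
  simp [HasDirDeriv]

lemma self (hhom : ∀ c : ℝ, 0 < c → ∀ y, f (c • y) = c * f y) : HasDirDeriv f x x (f x) := by
  refine tendsto_const_nhds.congr' ?_
  filter_upwards [self_mem_nhdsWithin] with t (ht : 0 < t)
  rw [show x + t • x = (1 + t) • x by module, hhom _ (by linarith)]
  field_simp
  ring

lemma const_smul (h : HasDirDeriv f x d L) {c : ℝ} (hc : 0 < c) :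
    HasDirDeriv f x (c • d) (c * L) := by
  have hct : Tendsto (fun t : ℝ => c * t) (𝓝[>] 0) (𝓝[>] 0) := by
    refine tendsto_nhdsWithin_of_tendsto_nhds_of_eventually_within _ ?_ ?_
    · simpa using ((continuous_const_mul c).tendsto 0).mono_left nhdsWithin_le_nhds
    · filter_upwards [self_mem_nhdsWithin] with t (ht : 0 < t) using mul_pos hc ht
  refine ((h.comp hct).const_mul c).congr' ?_
  filter_upwards [self_mem_nhdsWithin] with t (ht : 0 < t)
  simp only [Function.comp_apply, smul_smul]
  field_simp

end HasDirDeriv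

section Concave

variable {n : ℕ} {f : (Fin n → ℝ) → ℝ} {s : Set (Fin n → ℝ)} {x : Fin n → ℝ}

lemma ConcaveOn.sum_mul_le_of_hasDirDeriv (hf : ConcaveOn ℝ s f) (hx : x ∈ interior s)
    {ι : Type*} {S : Finset ι} {w : ι → ℝ} (hw₀ : ∀ j ∈ S, 0 ≤ w j) (hw₁ : ∑ j ∈ S, w j = 1)
    {d : ι → Fin n → ℝ} {L : ι → ℝ} (hd : ∀ j ∈ S, HasDirDeriv f x (d j) (L j)) {M : ℝ}
    (hM : HasDirDeriv f x (∑ j ∈ S, w j • d j) M) : ∑ j ∈ S, w j * L j ≤ M := by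
  have hmem : ∀ᶠ t in 𝓝[>] (0 : ℝ), ∀ j ∈ S, x + t • d j ∈ s :=
    nhdsWithin_le_nhds <| (S.eventually_all).mpr fun j _ =>
      eventually_add_smul_mem_of_mem_interior hx (d j)
  refine le_of_tendsto_of_tendsto
    (tendsto_finsetSum S fun j hj => (hd j hj).const_mul (w j)) hM ?_
  filter_upwards [hmem, self_mem_nhdsWithin] with t hmemt (ht : 0 < t)
  exact hf.sum_mul_div_le hw₀ hw₁ ht.le hmemt

lemma ConcaveOn.sum_le_of_hasDirDeriv (hf : ConcaveOn ℝ s f) (hx : x ∈ interior s)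
    {ι : Type*} (S : Finset ι) (d : ι → Fin n → ℝ) (L : ι → ℝ)
    (hd : ∀ j ∈ S, HasDirDeriv f x (d j) (L j)) {M : ℝ}
    (hM : HasDirDeriv f x (∑ j ∈ S, d j) M) : ∑ j ∈ S, L j ≤ M := by
  rcases S.eq_empty_or_nonempty with rfl | hS
  · simpa using (HasDirDeriv.zero.unique hM).le
  have hk : (0 : ℝ) < S.card := by exact_mod_cast hS.card_pos
  have hw₁ : ∑ _j ∈ S, (S.card : ℝ)⁻¹ = 1 := by simp [hk.ne']
  have hsum : ∑ j ∈ S, (S.card : ℝ)⁻¹ • (S.card : ℝ) • d j = ∑ j ∈ S, d j := by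
    simp [smul_smul, hk.ne']
  have hmean := hf.sum_mul_le_of_hasDirDeriv hx (fun _ _ => by positivity) hw₁
    (fun j hj => (hd j hj).const_smul hk) (hsum ▸ hM)
  simpa [← mul_assoc, hk.ne'] using hmean

lemma ConcaveOn.add_le_of_hasDirDeriv (hf : ConcaveOn ℝ s f) (hx : x ∈ interior s)
    {d₁ d₂ : Fin n → ℝ} {L₁ L₂ M : ℝ} (h₁ : HasDirDeriv f x d₁ L₁) (h₂ : HasDirDeriv f x d₂ L₂)
    (hM : HasDirDeriv f x (d₁ + d₂) M) : L₁ + L₂ ≤ M := by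
  simpa using hf.sum_le_of_hasDirDeriv hx Finset.univ ![d₁, d₂] ![L₁, L₂]
    (by simp [Fin.forall_fin_two, h₁, h₂]) (by simpa using hM)

end Concave

theorem stmt1 {n : ℕ} (f : (Fin n → ℝ) → ℝ) (x : Fin n → ℝ)
    (hconc : ConcaveOn ℝ {y : Fin n → ℝ | ∀ i, 0 ≤ y i} f)
    (hhom : ∀ c : ℝ, 0 < c → ∀ y, f (c • y) = c * f y)
    (hx : x ∈ interior {y : Fin n → ℝ | ∀ i, 0 ≤ y i})
    (Dneg P N : Fin n → ℝ)
    (hDneg : ∀ i, HasDirDeriv f x (-(Pi.single i 1)) (Dneg i))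
    (hP : ∀ i, HasDirDeriv f x (x i • (Pi.single i 1 : Fin n → ℝ)) (P i))
    (hN : ∀ i, HasDirDeriv f x (-(x i • (Pi.single i 1 : Fin n → ℝ))) (N i))
    (heuler : ∑ i, (-(Dneg i)) * x i = f x) :
    ∀ i, -(N i) = P i := by
  intro i
  have hN_eq : ∀ j, N j = x j * Dneg j := fun j =>
    (hN j).unique (by simpa using (hDneg j).const_smul (pos_of_mem_interior_nonneg hx j))
  have hsumN : ∑ j, N j = -f x := by
    simp only [← heuler, hN_eq, ← Finset.sum_neg_distrib]
    exact Finset.sum_congr rfl fun j _ => by ring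
  have hle : P i + N i ≤ 0 :=
    hconc.add_le_of_hasDirDeriv hx (hP i) (hN i) (by simpa using HasDirDeriv.zero)
  have hge : f x + (-f x - N i) ≤ P i := by
    have hsum := hconc.sum_le_of_hasDirDeriv hx Finset.univ _ (Function.update N i (f x))
      (fun j _ => by
        rcases eq_or_ne j i with rfl | hj
        · simpa using HasDirDeriv.self hhom
        · simpa [hj] using hN j)
      ((sum_update_neg_smul_single x i).symm ▸ hP i)
    rwa [Finset.sum_update_of_mem (Finset.mem_univ i), Finset.sdiff_singleton_eq_erase,
      Finset.sum_erase_eq_sub (Finset.mem_univ i), hsumN] at hsum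
  linarith
end

section
/- The Shapley value is efficient: for any game G : 𝒮 → ℝ on a finite set I with G(∅) = 0, the sum over i ∈ I of Sh_i(G) = ∑_{S ⊆ I \ {i}} (|S|!(|I|−|S|−1)!/|I|!) · (G(S ∪ {i}) − G(S)) equals G(I). -/
/-!
Regrouping the double sum by coalitions, `G T` receives `|T| w(|T| - 1)` from the players
entering `T` and `-(n - |T|) w(|T|)` from the players outside `T`, where
`w k = k! (n - k - 1)! / n!`. Both terms equal `|T|! (n - |T|)! / n!` whenever they are present,
so they cancel except at `T = univ` (no player outside) and `T = ∅` (no player entering),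
leaving `G univ - G ∅`.
-/

open Finset

section Regrouping

variable {ι M : Type*} [Fintype ι] [DecidableEq ι] [AddCommMonoid M]

theorem sum_sum_powerset_erase_eq_sum_sum_compl (φ : ι → Finset ι → M) :
    ∑ i, ∑ S ∈ (univ.erase i).powerset, φ i S = ∑ S, ∑ i ∈ Sᶜ, φ i S :=
  sum_comm' fun i S => by simp [subset_erase]

theorem sum_sum_powerset_erase_eq_sum_sum_erase (φ : ι → Finset ι → M) :
    ∑ i, ∑ S ∈ (univ.erase i).powerset, φ i S = ∑ T, ∑ i ∈ T, φ i (T.erase i) := by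
  rw [sum_comm' (t' := univ) (s' := fun i => {T : Finset ι | i ∈ T}) (by simp)]
  refine sum_congr rfl fun i _ => ?_
  refine sum_nbij' (insert i) (·.erase i) ?_ ?_ ?_ ?_ ?_ <;>
    simp +contextual [subset_erase, insert_erase]

end Regrouping

noncomputable def shapleyWeight (n k : ℕ) : ℝ :=
  (k.factorial * (n - k - 1).factorial : ℝ) / n.factorial

theorem succ_mul_shapleyWeight (n k : ℕ) :
    (k + 1) * shapleyWeight n k = (k + 1).factorial * (n - (k + 1)).factorial / n.factorial := by
  rw [shapleyWeight, Nat.sub_sub]; push_cast [Nat.factorial_succ]; ring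

theorem sub_mul_shapleyWeight {n k : ℕ} (hk : k < n) :
    (n - k) * shapleyWeight n k = k.factorial * (n - k).factorial / n.factorial := by
  obtain ⟨m, hm⟩ : ∃ m, n - k = m + 1 := ⟨n - k - 1, by omega⟩
  rw [shapleyWeight, ← Nat.cast_sub hk.le, hm, Nat.add_sub_cancel, Nat.factorial_succ]
  push_cast; ring

theorem mul_shapleyWeight_pred_sub_sub_mul_shapleyWeight {n k : ℕ} (hk : k ≤ n) :
    k * shapleyWeight n (k - 1) - (n - k) * shapleyWeight n k =
      (if k = n then 1 else 0) - (if k = 0 then 1 else 0) := by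
  rcases hk.lt_or_eq with hlt | rfl
  · have h := sub_mul_shapleyWeight hlt
    rcases k with _ | j
    · simp_all [hlt.ne, Nat.factorial_ne_zero]
    · rw [h, Nat.add_sub_cancel, Nat.cast_succ, succ_mul_shapleyWeight]
      simp [hlt.ne]
  · rcases k with _ | j
    · simp
    · have hn : ((j + 1).factorial : ℝ) ≠ 0 := by positivity
      rw [Nat.add_sub_cancel, Nat.cast_succ, succ_mul_shapleyWeight]
      simp [hn]

noncomputable def shapleyValue {ι : Type*} [Fintype ι] [DecidableEq ι]
    (G : Finset ι → ℝ) (i : ι) : ℝ :=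
  ∑ S ∈ (univ.erase i).powerset, shapleyWeight (Fintype.card ι) S.card * (G (insert i S) - G S)

theorem sum_shapleyValue {ι : Type*} [Fintype ι] [DecidableEq ι] (G : Finset ι → ℝ) :
    ∑ i, shapleyValue G i = G univ - G ∅ := by
  set n := Fintype.card ι
  have h_gain : ∑ i, ∑ S ∈ (univ.erase i).powerset, shapleyWeight n S.card * G (insert i S) =
      ∑ T : Finset ι, T.card * shapleyWeight n (T.card - 1) * G T := by
    rw [sum_sum_powerset_erase_eq_sum_sum_erase]
    refine sum_congr rfl fun T _ => ?_
    rw [sum_congr rfl fun i hi => by rw [insert_erase hi, card_erase_of_mem hi], sum_const,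
      nsmul_eq_mul, mul_assoc]
  have h_loss : ∑ i, ∑ S ∈ (univ.erase i).powerset, shapleyWeight n S.card * G S =
      ∑ S : Finset ι, (n - S.card) * shapleyWeight n S.card * G S := by
    rw [sum_sum_powerset_erase_eq_sum_sum_compl]
    refine sum_congr rfl fun S _ => ?_
    rw [sum_const, card_compl, nsmul_eq_mul, Nat.cast_sub S.card_le_univ, mul_assoc]
  simp only [shapleyValue, mul_sub, sum_sub_distrib]
  rw [h_gain, h_loss, ← sum_sub_distrib]
  calc ∑ T : Finset ι, (T.card * shapleyWeight n (T.card - 1) * G T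
          - (n - T.card) * shapleyWeight n T.card * G T)
      = ∑ T : Finset ι, ((if T = univ then G T else 0) - (if T = ∅ then G T else 0)) := by
        refine sum_congr rfl fun T _ => ?_
        rw [← sub_mul, mul_shapleyWeight_pred_sub_sub_mul_shapleyWeight (card_le_univ T)]
        simp only [card_eq_iff_eq_univ, card_eq_zero]
        split_ifs <;> ring
    _ = G univ - G ∅ := by simp only [sum_sub_distrib, sum_ite_eq', mem_univ, if_true]

theorem stmt6_general {n : ℕ} (G : Finset (Fin n) → ℝ) (hzero : G ∅ = 0) :
    (∑ i : Fin n, ∑ S ∈ (Finset.univ.erase i).powerset,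
      ((Nat.factorial S.card * Nat.factorial (n - S.card - 1) : ℝ) / (Nat.factorial n : ℝ)) *
        (G (insert i S) - G S))
    = G Finset.univ := by
  simpa only [shapleyValue, shapleyWeight, Fintype.card_fin, hzero, sub_zero] using
    sum_shapleyValue G

theorem stmt6 {n : ℕ} (hn : 0 < n) (G : Finset (Fin n) → ℝ) (hzero : G ∅ = 0) :
    (∑ i : Fin n, ∑ S ∈ (Finset.univ.erase i).powerset,
      ((Nat.factorial S.card * Nat.factorial (n - S.card - 1) : ℝ) / (Nat.factorial n : ℝ)) *
        (G (insert i S) - G S))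
    = G Finset.univ :=
  stmt6_general G hzero
end

section
/- A game G : 𝒮 → ℝ on finite I with G(∅)=0 has nonempty core if and only if it is balanced, i.e. G(I) = sup { ∑ₖ αₖ G(Sₖ) : αₖ ≥ 0, ∑ₖ αₖ 1_{Sₖ} = 1_I }. -/
/-- The set of values of nonnegative weighted combinations `∑ₖ αₖ G(Sₖ)` over finitely many
coalitions whose weighted indicator vectors sum to the indicator of `S`. -/
def coverSet {n : ℕ} (G : Finset (Fin n) → ℝ) (S : Finset (Fin n)) : Set ℝ :=
  {v | ∃ α : Finset (Fin n) → ℝ, (∀ T, 0 ≤ α T) ∧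
    (∀ i, (∑ T : Finset (Fin n), if i ∈ T then α T else 0) = (if i ∈ S then (1:ℝ) else 0)) ∧
    v = ∑ T : Finset (Fin n), α T * G T}


open Finset

noncomputable section BS

/-- Dot product on `ι → ℝ`. -/
def dotp {ι : Type*} [Fintype ι] (x y : ι → ℝ) : ℝ := ∑ i, x i * y i

lemma dotp_sub_left {ι : Type*} [Fintype ι] (x y z : ι → ℝ) :
    dotp (x - y) z = dotp x z - dotp y z := by
  simp [dotp, sub_mul, Finset.sum_sub_distrib]

lemma dotp_sub_right {ι : Type*} [Fintype ι] (x y z : ι → ℝ) :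
    dotp x (y - z) = dotp x y - dotp x z := by
  simp [dotp, mul_sub, Finset.sum_sub_distrib]

lemma dotp_smul_left {ι : Type*} [Fintype ι] (r : ℝ) (x y : ι → ℝ) :
    dotp (r • x) y = r * dotp x y := by
  simp [dotp, Finset.mul_sum, mul_assoc]

lemma dotp_smul_right {ι : Type*} [Fintype ι] (r : ℝ) (x y : ι → ℝ) :
    dotp x (r • y) = r * dotp x y := by
  simp [dotp, Finset.mul_sum, mul_left_comm]

lemma dotp_self_pos {ι : Type*} [Fintype ι] {x : ι → ℝ} (hx : x ≠ 0) : 0 < dotp x x := by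
  have h : ∃ i, x i ≠ 0 := by
    by_contra h; push_neg at h; exact hx (funext h)
  obtain ⟨i, hi⟩ := h
  exact Finset.sum_pos' (fun j _ => mul_self_nonneg _) ⟨i, mem_univ i, mul_self_pos.mpr hi⟩

/-- Farkas' lemma, induction form. -/
theorem farkasAux {ι : Type*} [Fintype ι] :
    ∀ (m : ℕ) (a : Fin m → ι → ℝ) (b : ι → ℝ),
      (∃ c : Fin m → ℝ, (∀ j, 0 ≤ c j) ∧ b = ∑ j, c j • a j) ∨
      (∃ y : ι → ℝ, (∀ j, 0 ≤ dotp (a j) y) ∧ dotp b y < 0) := by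
  intro m
  induction m with
  | zero =>
    intro a b
    rcases eq_or_ne b 0 with hb | hb
    · exact Or.inl ⟨0, fun j => le_rfl, by simp [hb]⟩
    · refine Or.inr ⟨-b, fun j => j.elim0, ?_⟩
      have h1 := dotp_self_pos hb
      have h2 : dotp b (-b) = -dotp b b := by simp [dotp]
      rw [h2]; linarith
  | succ m IH =>
    intro a b
    rcases IH (fun j => a j.succ) b with ⟨c, hc, hb⟩ | ⟨y, hy, hby⟩
    · refine Or.inl ⟨Fin.cons 0 c, ?_, ?_⟩
      · intro j; refine Fin.cases ?_ ?_ j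
        · simp
        · intro j; simpa using hc j
      · rw [Fin.sum_univ_succ]; simpa using hb
    · rcases le_or_gt 0 (dotp (a 0) y) with h0 | h0
      · refine Or.inr ⟨y, ?_, hby⟩
        intro j; refine Fin.cases h0 (fun j => hy j) j
      · rcases IH (fun j => a j.succ - (dotp (a j.succ) y / dotp (a 0) y) • a 0)
            (b - (dotp b y / dotp (a 0) y) • a 0) with ⟨c, hc, hb'⟩ | ⟨z, hz, hbz⟩
        · refine Or.inl ⟨Fin.cons (dotp b y / dotp (a 0) y
            - ∑ j, c j * (dotp (a j.succ) y / dotp (a 0) y)) c, ?_, ?_⟩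
          · intro j; refine Fin.cases ?_ ?_ j
            · simp only [Fin.cons_zero]
              have hβ : 0 < dotp b y / dotp (a 0) y := div_pos_of_neg_of_neg hby h0
              have hγ : ∑ j, c j * (dotp (a j.succ) y / dotp (a 0) y) ≤ 0 :=
                Finset.sum_nonpos fun j _ => mul_nonpos_of_nonneg_of_nonpos (hc j)
                  (div_nonpos_of_nonneg_of_nonpos (hy j) h0.le)
              linarith
            · intro j; simpa using hc j
          · rw [Fin.sum_univ_succ]
            simp only [Fin.cons_zero, Fin.cons_succ]
            rw [sub_eq_iff_eq_add] at hb'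
            nth_rewrite 1 [hb']
            simp only [smul_sub, smul_smul, Finset.sum_sub_distrib, sub_smul, Finset.sum_smul]
            abel
        · have key : ∀ v : ι → ℝ, dotp v (z - (dotp (a 0) z / dotp (a 0) y) • y)
              = dotp (v - (dotp v y / dotp (a 0) y) • a 0) z := by
            intro v
            rw [dotp_sub_right, dotp_smul_right, dotp_sub_left, dotp_smul_left]
            ring
          refine Or.inr ⟨z - (dotp (a 0) z / dotp (a 0) y) • y, ?_, ?_⟩
          · intro j; refine Fin.cases ?_ ?_ j
            · rw [key]
              have : a 0 - (dotp (a 0) y / dotp (a 0) y) • a 0 = 0 := by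
                rw [div_self h0.ne, one_smul, sub_self]
              rw [this]
              simp [dotp]
            · intro j; rw [key]; exact hz j
          · rw [key]; exact hbz

/-- Farkas' lemma for an arbitrary finite index type. -/
theorem farkas {ι κ : Type*} [Fintype ι] [Fintype κ] (a : κ → ι → ℝ) (b : ι → ℝ) :
    (∃ c : κ → ℝ, (∀ j, 0 ≤ c j) ∧ b = ∑ j, c j • a j) ∨
    (∃ y : ι → ℝ, (∀ j, 0 ≤ dotp (a j) y) ∧ dotp b y < 0) := by
  classical
  obtain e := Fintype.equivFin κ
  rcases farkasAux (Fintype.card κ) (fun j => a (e.symm j)) b with ⟨c, hc, hb⟩ | ⟨y, hy, hby⟩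
  · refine Or.inl ⟨fun k => c (e k), fun k => hc _, ?_⟩
    rw [hb]
    have h := Equiv.sum_comp e.symm (fun k => c (e k) • a k)
    simp only [Equiv.apply_symm_apply] at h
    simpa using h
  · refine Or.inr ⟨y, fun k => by simpa using hy (e k), hby⟩

end BS

/-- The constraint matrix for the Bondareva–Shapley LP. -/
def bsA {n : ℕ} (G : Finset (Fin n) → ℝ) : Option (Finset (Fin n)) → Option (Fin n) → ℝ
  | none, none => -(G Finset.univ)
  | none, some _ => -1
  | some T, none => G T
  | some T, some i => if i ∈ T then 1 else 0

/-- The target vector for the Bondareva–Shapley LP. -/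
def bsb (n : ℕ) : Option (Fin n) → ℝ
  | none => 1
  | some _ => 0

/-- Bondareva–Shapley: the core is nonempty iff the game is balanced, i.e. `G(I)` equals the
supremum of the weighted values over balanced families covering `I`. -/
theorem stmt8 {n : ℕ} (G : Finset (Fin n) → ℝ) (hzero : G ∅ = 0) :
    (∃ r : Fin n → ℝ, ∑ i, r i = G Finset.univ ∧ ∀ S : Finset (Fin n), G S ≤ ∑ i ∈ S, r i) ↔
      IsLUB (coverSet G Finset.univ) (G Finset.univ) := by
  classical
  constructor
  · rintro ⟨r, hsum, hcore⟩
    constructor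
    · rintro v ⟨α, hα0, hα1, rfl⟩
      have key : ∀ T : Finset (Fin n), α T * ∑ i ∈ T, r i
          = ∑ i : Fin n, (if i ∈ T then α T else 0) * r i := by
        intro T
        rw [Finset.mul_sum, ← Finset.univ_inter T, ← Finset.sum_ite_mem]
        exact Finset.sum_congr rfl fun i _ => by split <;> simp_all
      have step2 : ∑ T : Finset (Fin n), α T * ∑ i ∈ T, r i = ∑ i, r i := by
        calc ∑ T : Finset (Fin n), α T * ∑ i ∈ T, r i
            = ∑ T : Finset (Fin n), ∑ i : Fin n, (if i ∈ T then α T else 0) * r i :=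
              Finset.sum_congr rfl fun T _ => key T
          _ = ∑ i : Fin n, ∑ T : Finset (Fin n), (if i ∈ T then α T else 0) * r i :=
              Finset.sum_comm
          _ = ∑ i : Fin n, (∑ T : Finset (Fin n), if i ∈ T then α T else 0) * r i :=
              Finset.sum_congr rfl fun i _ => (Finset.sum_mul _ _ _).symm
          _ = ∑ i, r i := by
              refine Finset.sum_congr rfl fun i _ => ?_
              rw [hα1 i, if_pos (Finset.mem_univ i), one_mul]
      have step1 : ∑ T : Finset (Fin n), α T * G T ≤ ∑ T : Finset (Fin n), α T * ∑ i ∈ T, r i :=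
        Finset.sum_le_sum fun T _ => mul_le_mul_of_nonneg_left (hcore T) (hα0 T)
      calc ∑ T : Finset (Fin n), α T * G T ≤ ∑ T : Finset (Fin n), α T * ∑ i ∈ T, r i := step1
        _ = ∑ i, r i := step2
        _ = G Finset.univ := hsum
    · intro w hw
      apply hw
      refine ⟨fun T => if T = Finset.univ then (1:ℝ) else 0, fun T => by positivity, ?_, ?_⟩
      · intro i
        have h : ∀ T : Finset (Fin n),
            (if i ∈ T then (if T = Finset.univ then (1:ℝ) else 0) else 0)
              = if T = Finset.univ then (if i ∈ T then (1:ℝ) else 0) else 0 := by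
          intro T; by_cases h1 : i ∈ T <;> by_cases h2 : T = Finset.univ <;> simp [h1, h2]
        rw [Finset.sum_congr rfl fun T _ => h T, Finset.sum_ite_eq' Finset.univ Finset.univ]
        simp
      · rw [Finset.sum_congr rfl fun T _ => (ite_mul _ _ _ _ : _ = if T = Finset.univ then 1 * G T else 0 * G T)]
        simp [Finset.sum_ite_eq' Finset.univ Finset.univ]
  · intro hub
    have upper : ∀ v ∈ coverSet G Finset.univ, v ≤ G Finset.univ := fun v hv => hub.1 hv
    rcases farkas (bsA G) (bsb n) with ⟨c, hc, hb⟩ | ⟨y, hy, hby⟩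
    · exfalso
      have hcoord : ∀ i : Fin n,
          ∑ T : Finset (Fin n), (if i ∈ T then c (some T) else 0) = c none := by
        intro i
        have h := congrFun hb (some i)
        simp [bsb, bsA, Fintype.sum_option, Finset.sum_apply, mul_ite] at h
        linarith
      have hval : c none * G Finset.univ + 1 = ∑ T : Finset (Fin n), c (some T) * G T := by
        have h := congrFun hb none
        simp [bsb, bsA, Fintype.sum_option, Finset.sum_apply] at h
        linarith
      by_cases hc0 : c none = 0
      · have hT0 : ∀ T : Finset (Fin n), c (some T) * G T = 0 := by
          intro T
          rcases T.eq_empty_or_nonempty with rfl | ⟨i, hi⟩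
          · simp [hzero]
          · have h := hcoord i
            rw [hc0] at h
            have hz : ∀ T' ∈ Finset.univ (α := Finset (Fin n)),
                (0:ℝ) ≤ if i ∈ T' then c (some T') else 0 := by
              intro T' _; split
              · exact hc _
              · exact le_rfl
            have h0 := (Finset.sum_eq_zero_iff_of_nonneg hz).mp h T (Finset.mem_univ T)
            rw [if_pos hi] at h0
            rw [h0, zero_mul]
        have hsum0 : ∑ T : Finset (Fin n), c (some T) * G T = 0 :=
          Finset.sum_eq_zero fun T _ => hT0 T
        rw [hc0, zero_mul, zero_add, hsum0] at hval
        exact one_ne_zero hval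
      · have hcpos : 0 < c none := lt_of_le_of_ne (hc none) (Ne.symm hc0)
        have hmem : (∑ T : Finset (Fin n), (c (some T) / c none) * G T)
            ∈ coverSet G Finset.univ := by
          refine ⟨fun T => c (some T) / c none, fun T => div_nonneg (hc _) hcpos.le, ?_, rfl⟩
          intro i
          rw [if_pos (Finset.mem_univ i)]
          have hd : ∑ T : Finset (Fin n), (if i ∈ T then c (some T) / c none else 0)
              = (∑ T : Finset (Fin n), if i ∈ T then c (some T) else 0) / c none := by
            rw [Finset.sum_div]
            exact Finset.sum_congr rfl fun T _ => by split <;> simp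
          rw [hd, hcoord i, div_self hc0]
        have hle := upper _ hmem
        have hq : ∑ T : Finset (Fin n), (c (some T) / c none) * G T
            = (∑ T : Finset (Fin n), c (some T) * G T) / c none := by
          rw [Finset.sum_div]
          exact Finset.sum_congr rfl fun T _ => by ring
        rw [hq, ← hval, div_le_iff₀ hcpos] at hle
        nlinarith
    · have hs : y none < 0 := by
        simpa [dotp, bsb, Fintype.sum_option] using hby
      have hT : ∀ T : Finset (Fin n), 0 ≤ G T * y none + ∑ i ∈ T, y (some i) := by
        intro T
        have h := hy (some T)
        simp only [dotp, bsA, Fintype.sum_option, ite_mul, one_mul, zero_mul] at h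
        rw [Finset.sum_ite_mem, Finset.univ_inter] at h
        exact h
      have hU : G Finset.univ * y none + ∑ i, y (some i) ≤ 0 := by
        have h := hy none
        simp only [dotp, bsA, Fintype.sum_option, neg_mul, one_mul] at h
        rw [Finset.sum_neg_distrib] at h
        linarith
      refine ⟨fun i => y (some i) / -(y none), ?_, ?_⟩
      · rw [← Finset.sum_div, div_eq_iff (by linarith : -(y none) ≠ 0)]
        have h1 := hT Finset.univ
        nlinarith
      · intro S
        have h := hT S
        rw [← Finset.sum_div, le_div_iff₀ (by linarith : (0:ℝ) < -(y none))]
        nlinarith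
end
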